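/- Let W(n,m) = exp(2nm + m²) erfc(n + m) and let r > 0, k_d > 0, α real with α + √k_d > 0. Then ∫₀^∞ exp(−k_d t) W(r/√t, α√t) dt = exp(−2r√k_d)/(α√k_d + k_d). -/

import Mathlib

open MeasureTheory Real

/-- The complementary error function `erfc z = (2/√π) ∫_z^∞ exp(−t²) dt`. -/
noncomputable def erfc (z : ℝ) : ℝ :=
  (2 / Real.sqrt π) * ∫ t in Set.Ioi z, Real.exp (-t ^ 2)

open Set Filter Topology

lemma gauss_integrable : Integrable (fun t : ℝ => Real.exp (-t ^ 2)) := by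
  have := integrable_exp_neg_mul_sq (one_pos (α := ℝ))
  simpa using this

lemma gauss_continuous : Continuous (fun t : ℝ => Real.exp (-t ^ 2)) := by
  fun_prop

lemma sqrt_pi_pos : 0 < Real.sqrt π := Real.sqrt_pos.mpr Real.pi_pos

lemma erfc_nonneg (z : ℝ) : 0 ≤ erfc z := by
  unfold erfc
  apply mul_nonneg (by positivity)
  exact integral_nonneg fun t => (Real.exp_pos _).le

lemma erfc_sub {y z : ℝ} (h : y ≤ z) :
    erfc y - erfc z = (2 / Real.sqrt π) * ∫ t in y..z, Real.exp (-t ^ 2) := by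
  unfold erfc
  rw [← mul_sub]
  congr 1
  rw [intervalIntegral.integral_of_le h]
  have hu : Set.Ioi y = Set.Ioc y z ∪ Set.Ioi z := (Set.Ioc_union_Ioi_eq_Ioi h).symm
  rw [hu, setIntegral_union (Set.Ioc_disjoint_Ioi le_rfl) measurableSet_Ioi
    gauss_integrable.integrableOn gauss_integrable.integrableOn]
  ring

lemma erfc_zero : erfc 0 = 1 := by
  unfold erfc
  have := integral_gaussian_Ioi 1
  simp only [neg_mul, one_mul] at this
  rw [this, div_one]
  field_simp

lemma erfc_eq (z : ℝ) :
    erfc z = 1 - (2 / Real.sqrt π) * ∫ t in (0:ℝ)..z, Real.exp (-t ^ 2) := by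
  rcases le_or_gt 0 z with h | h
  · have := erfc_sub h
    rw [erfc_zero] at this
    linarith
  · have := erfc_sub h.le
    rw [erfc_zero, intervalIntegral.integral_symm] at this
    linarith

lemma erfc_hasDerivAt (z : ℝ) :
    HasDerivAt erfc (-(2 / Real.sqrt π * Real.exp (-z ^ 2))) z := by
  have h1 : HasDerivAt (fun u : ℝ => ∫ t in (0:ℝ)..u, Real.exp (-t ^ 2))
      (Real.exp (-z ^ 2)) z := by
    exact intervalIntegral.integral_hasDerivAt_right
      gauss_integrable.intervalIntegrable
      (gauss_continuous.stronglyMeasurableAtFilter _ _)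
      gauss_continuous.continuousAt
  have h2 : HasDerivAt (fun z : ℝ => 1 - (2 / Real.sqrt π) *
      ∫ t in (0:ℝ)..z, Real.exp (-t ^ 2))
      (-(2 / Real.sqrt π * Real.exp (-z ^ 2))) z := by
    simpa using ((h1.const_mul (2 / Real.sqrt π)).const_sub 1)
  exact h2.congr_of_eventuallyEq (Eventually.of_forall fun x => erfc_eq x)

lemma erfc_tendsto_atTop : Tendsto erfc atTop (𝓝 0) := by
  have h1 : Tendsto (fun z : ℝ => ∫ t in (0:ℝ)..z, Real.exp (-t ^ 2)) atTop
      (𝓝 (∫ t in Set.Ioi (0:ℝ), Real.exp (-t ^ 2))) :=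
    intervalIntegral_tendsto_integral_Ioi 0 gauss_integrable.integrableOn tendsto_id
  have h2 := (tendsto_const_nhds (x := (1:ℝ))).sub (h1.const_mul (2 / Real.sqrt π))
  have h3 : (1:ℝ) - 2 / Real.sqrt π * ∫ t in Set.Ioi (0:ℝ), Real.exp (-t ^ 2) = 0 := by
    have : (2 / Real.sqrt π) * ∫ t in Set.Ioi (0:ℝ), Real.exp (-t ^ 2) = erfc 0 := rfl
    rw [this, erfc_zero]; ring
  rw [h3] at h2
  exact h2.congr fun z => (erfc_eq z).symm

lemma gauss_integral_Iic : ∫ t in Set.Iic (0:ℝ), Real.exp (-t ^ 2) = Real.sqrt π / 2 := by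
  have hfull : ∫ t : ℝ, Real.exp (-t ^ 2) = Real.sqrt π := by
    have := integral_gaussian 1
    simpa using this
  have hIoi : ∫ t in Set.Ioi (0:ℝ), Real.exp (-t ^ 2) = Real.sqrt π / 2 := by
    have := integral_gaussian_Ioi 1
    simpa using this
  have := intervalIntegral.integral_Iic_add_Ioi (b := (0:ℝ)) gauss_integrable.integrableOn
    gauss_integrable.integrableOn
  rw [hfull, hIoi] at this
  linarith

lemma erfc_tendsto_atBot : Tendsto erfc atBot (𝓝 2) := by
  have h1 : Tendsto (fun z : ℝ => ∫ t in z..(0:ℝ), Real.exp (-t ^ 2)) atBot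
      (𝓝 (∫ t in Set.Iic (0:ℝ), Real.exp (-t ^ 2))) :=
    intervalIntegral_tendsto_integral_Iic 0 gauss_integrable.integrableOn tendsto_id
  have h2 := (tendsto_const_nhds (x := (1:ℝ))).add (h1.const_mul (2 / Real.sqrt π))
  have h3 : (1:ℝ) + 2 / Real.sqrt π * ∫ t in Set.Iic (0:ℝ), Real.exp (-t ^ 2) = 2 := by
    rw [gauss_integral_Iic]
    field_simp
    norm_num
  rw [h3] at h2
  refine h2.congr fun z => ?_
  rw [erfc_eq z, intervalIntegral.integral_symm]
  ring

lemma erfc_le_two (z : ℝ) : erfc z ≤ 2 := by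
  unfold erfc
  have h1 : ∫ t in Set.Ioi z, Real.exp (-t ^ 2) ≤ ∫ t : ℝ, Real.exp (-t ^ 2) :=
    setIntegral_le_integral gauss_integrable (Eventually.of_forall fun t => (Real.exp_pos _).le)
  have hfull : ∫ t : ℝ, Real.exp (-t ^ 2) = Real.sqrt π := by
    have := integral_gaussian 1; simpa using this
  calc 2 / Real.sqrt π * ∫ t in Set.Ioi z, Real.exp (-t ^ 2)
      ≤ 2 / Real.sqrt π * Real.sqrt π := by
        rw [← hfull]; exact mul_le_mul_of_nonneg_left h1 (by positivity)
    _ = 2 := by field_simp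

lemma integral_Ioi_mul_exp (x : ℝ) (hx : 0 < x) :
    ∫ t in Set.Ioi x, t * Real.exp (-t ^ 2) = Real.exp (-x ^ 2) / 2 := by
  have hderiv : ∀ t ∈ Set.Ici x, HasDerivAt (fun t : ℝ => -Real.exp (-t ^ 2) / 2)
      (t * Real.exp (-t ^ 2)) t := by
    intro t _
    have h1 : HasDerivAt (fun t : ℝ => -t ^ 2) (-(2 * t)) t := by
      simpa using ((hasDerivAt_pow 2 t).fun_neg)
    have := (h1.exp.neg.div_const 2)
    refine this.congr_deriv (Eq.symm ?_)
    ring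
  have htop : Tendsto (fun t : ℝ => -Real.exp (-t ^ 2) / 2) atTop (𝓝 0) := by
    have h1 : Tendsto (fun t : ℝ => -t ^ 2) atTop atBot := by
      apply tendsto_neg_atTop_atBot.comp
      exact tendsto_pow_atTop (by norm_num)
    have := (Real.tendsto_exp_atBot.comp h1).neg.div_const 2
    simpa using this
  have := integral_Ioi_of_hasDerivAt_of_nonneg' hderiv
    (fun t ht => mul_nonneg (hx.trans ht).le (Real.exp_pos _).le) htop
  rw [this]
  ring

lemma mul_exp_integrableOn (x : ℝ) (hx : 0 < x) :
    IntegrableOn (fun t : ℝ => t * Real.exp (-t ^ 2)) (Set.Ioi x) := by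
  have hderiv : ∀ t ∈ Set.Ici x, HasDerivAt (fun t : ℝ => -Real.exp (-t ^ 2) / 2)
      (t * Real.exp (-t ^ 2)) t := by
    intro t _
    have h1 : HasDerivAt (fun t : ℝ => -t ^ 2) (-(2 * t)) t := by
      simpa using ((hasDerivAt_pow 2 t).fun_neg)
    have := (h1.exp.neg.div_const 2)
    refine this.congr_deriv (Eq.symm ?_)
    ring
  have htop : Tendsto (fun t : ℝ => -Real.exp (-t ^ 2) / 2) atTop (𝓝 0) := by
    have h1 : Tendsto (fun t : ℝ => -t ^ 2) atTop atBot := by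
      apply tendsto_neg_atTop_atBot.comp
      exact tendsto_pow_atTop (by norm_num)
    have := (Real.tendsto_exp_atBot.comp h1).neg.div_const 2
    simpa using this
  exact integrableOn_Ioi_deriv_of_nonneg' hderiv
    (fun t ht => mul_nonneg (hx.trans ht).le (Real.exp_pos _).le) htop

lemma erfc_le {x : ℝ} (hx : 0 < x) : erfc x ≤ Real.exp (-x ^ 2) / (x * Real.sqrt π) := by
  have hcompare : ∫ t in Set.Ioi x, Real.exp (-t ^ 2)
      ≤ ∫ t in Set.Ioi x, (1 / x) * (t * Real.exp (-t ^ 2)) := by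
    apply setIntegral_mono_on gauss_integrable.integrableOn
      ((mul_exp_integrableOn x hx).const_mul _) measurableSet_Ioi
    intro t ht
    rw [Set.mem_Ioi] at ht
    have h1 : 1 ≤ t / x := (one_le_div hx).mpr ht.le
    calc Real.exp (-t ^ 2) = 1 * Real.exp (-t ^ 2) := by ring
      _ ≤ (t / x) * Real.exp (-t ^ 2) :=
          mul_le_mul_of_nonneg_right h1 (Real.exp_pos _).le
      _ = (1 / x) * (t * Real.exp (-t ^ 2)) := by ring
  rw [MeasureTheory.integral_const_mul, integral_Ioi_mul_exp x hx] at hcompare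
  unfold erfc
  calc 2 / Real.sqrt π * ∫ t in Set.Ioi x, Real.exp (-t ^ 2)
      ≤ 2 / Real.sqrt π * (1 / x * (Real.exp (-x ^ 2) / 2)) :=
        mul_le_mul_of_nonneg_left hcompare (by positivity)
    _ = Real.exp (-x ^ 2) / (x * Real.sqrt π) := by
        field_simp

lemma h_hasDerivAt (r s β : ℝ) {t : ℝ} (ht : 0 < t) :
    HasDerivAt (fun u => Real.exp (2*r*β + (β^2 - s^2)*u) *
        erfc (r / Real.sqrt u + β * Real.sqrt u))
      ((β^2 - s^2) * (Real.exp (2*r*β + (β^2 - s^2)*t) *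
          erfc (r / Real.sqrt t + β * Real.sqrt t))
        + Real.exp (-r^2/t - s^2*t) * (r/(t*Real.sqrt t) - β/Real.sqrt t) / Real.sqrt π) t := by
  obtain ⟨w, hw0, rfl⟩ : ∃ w : ℝ, 0 < w ∧ w^2 = t :=
    ⟨Real.sqrt t, Real.sqrt_pos.mpr ht, Real.sq_sqrt ht.le⟩
  simp only [Real.sqrt_sq hw0.le]
  have hsq : HasDerivAt Real.sqrt (1/(2*w)) (w^2) := by
    have := Real.hasDerivAt_sqrt (x := w^2) (by positivity)
    simpa [Real.sqrt_sq hw0.le] using this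
  have hq : HasDerivAt (fun u => r / Real.sqrt u + β * Real.sqrt u)
      (-(r/(2*(w^2*w))) + β/(2*w)) (w^2) := by
    have h1 : HasDerivAt (fun u => r / Real.sqrt u) (-(r/(2*(w^2*w)))) (w^2) := by
      have h2 := (hsq.inv (by rw [Real.sqrt_sq hw0.le]; exact hw0.ne')).const_mul r
      simp only [Real.sqrt_sq hw0.le] at h2
      have h3 : (fun u => r / Real.sqrt u) = fun u => r * (Real.sqrt u)⁻¹ := by
        funext u; rw [div_eq_mul_inv]
      rw [h3]
      refine h2.congr_deriv (Eq.symm ?_)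
      field_simp
    have h4 := hsq.const_mul β
    have h5 : β * (1 / (2 * w)) = β / (2 * w) := by ring
    rw [h5] at h4
    exact h1.add h4
  have hexp : HasDerivAt (fun u => Real.exp (2*r*β + (β^2-s^2)*u))
      (Real.exp (2*r*β + (β^2-s^2)*w^2) * (β^2-s^2)) (w^2) := by
    have h0 : HasDerivAt (fun u : ℝ => 2*r*β + (β^2-s^2)*u) (β^2-s^2) (w^2) := by
      simpa using (((hasDerivAt_id (w^2)).const_mul (β^2-s^2)).const_add (2*r*β))
    exact h0.exp
  have herfc := (erfc_hasDerivAt (r / Real.sqrt (w^2) + β * Real.sqrt (w^2))).comp (w^2) hq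
  simp only [Real.sqrt_sq hw0.le] at herfc
  have hmul := hexp.mul herfc
  refine hmul.congr_deriv (Eq.symm ?_)
  have key : Real.exp (-r^2/w^2 - s^2*w^2) = Real.exp (2*r*β + (β^2-s^2)*w^2) *
      Real.exp (-(r / w + β * w)^2) := by
    rw [← Real.exp_add]
    congr 1
    field_simp
    ring
  rw [key]
  simp only [Function.comp, Real.sqrt_sq hw0.le]
  have hp := sqrt_pi_pos.ne'
  field_simp
  ring

lemma u_hasDerivAt (r s : ℝ) {t : ℝ} (ht : 0 < t) :
    HasDerivAt (fun u => Real.sqrt u * Real.exp (-r^2/u - s^2*u))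
      (Real.exp (-r^2/t - s^2*t) *
        (1/(2*Real.sqrt t) + r^2/(t*Real.sqrt t) - s^2*Real.sqrt t)) t := by
  obtain ⟨w, hw0, rfl⟩ : ∃ w : ℝ, 0 < w ∧ w^2 = t :=
    ⟨Real.sqrt t, Real.sqrt_pos.mpr ht, Real.sq_sqrt ht.le⟩
  simp only [Real.sqrt_sq hw0.le]
  have hsq : HasDerivAt Real.sqrt (1/(2*w)) (w^2) := by
    have := Real.hasDerivAt_sqrt (x := w^2) (by positivity)
    simpa [Real.sqrt_sq hw0.le] using this
  have hg : HasDerivAt (fun u : ℝ => -r^2/u - s^2*u) (r^2/(w^2)^2 - s^2) (w^2) := by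
    have h1 : HasDerivAt (fun u : ℝ => -r^2/u) (r^2/(w^2)^2) (w^2) := by
      have h2 := (hasDerivAt_inv (x := w^2) (by positivity)).const_mul (-r^2 : ℝ)
      have h3 : (fun u : ℝ => -r^2/u) = fun u : ℝ => -r^2 * u⁻¹ := by
        funext u; rw [div_eq_mul_inv]
      rw [h3]
      refine h2.congr_deriv (Eq.symm ?_)
      field_simp
    have h4 : HasDerivAt (fun u : ℝ => s^2*u) (s^2) (w^2) := by
      simpa using (hasDerivAt_id (w^2)).const_mul (s^2)
    exact h1.sub h4
  have := hsq.mul hg.exp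
  refine this.congr_deriv (Eq.symm ?_)
  rw [Real.sqrt_sq hw0.le]
  field_simp
  ring

lemma sqrt_tendsto_atTop : Tendsto Real.sqrt atTop atTop := by
  apply tendsto_atTop_atTop.mpr
  intro b
  refine ⟨(max b 0)^2, fun a ha => ?_⟩
  calc b ≤ max b 0 := le_max_left _ _
    _ = Real.sqrt ((max b 0)^2) := (Real.sqrt_sq (le_max_right _ _)).symm
    _ ≤ Real.sqrt a := Real.sqrt_le_sqrt ha

lemma rdivsqrt_tendsto (r : ℝ) : Tendsto (fun t : ℝ => r / Real.sqrt t) atTop (𝓝 0) := by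
  simp_rw [div_eq_mul_inv]
  simpa using (sqrt_tendsto_atTop.inv_tendsto_atTop).const_mul r

lemma arg_atTop (r : ℝ) {β : ℝ} (hβ : 0 < β) :
    Tendsto (fun t : ℝ => r / Real.sqrt t + β * Real.sqrt t) atTop atTop :=
  (rdivsqrt_tendsto r).add_atTop (sqrt_tendsto_atTop.const_mul_atTop hβ)

lemma arg_atBot (r : ℝ) {β : ℝ} (hβ : β < 0) :
    Tendsto (fun t : ℝ => r / Real.sqrt t + β * Real.sqrt t) atTop atBot := by
  refine (rdivsqrt_tendsto r).add_atBot ?_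
  have h1 := sqrt_tendsto_atTop.const_mul_atTop (neg_pos.mpr hβ)
  have h2 := tendsto_neg_atTop_atBot.comp h1
  have h3 : (fun t : ℝ => -(-β * Real.sqrt t)) = fun t : ℝ => β * Real.sqrt t := by
    funext t; ring
  rw [← h3]
  exact h2

lemma sqrt_tendsto_zero_right : Tendsto Real.sqrt (𝓝[>] (0:ℝ)) (𝓝 0) := by
  have := (Real.continuous_sqrt.tendsto 0).mono_left (nhdsWithin_le_nhds (s := Set.Ioi (0:ℝ)))
  simpa using this

lemma arg_nhdsGT {r : ℝ} (hr : 0 < r) (β : ℝ) :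
    Tendsto (fun t : ℝ => r / Real.sqrt t + β * Real.sqrt t) (𝓝[>] (0:ℝ)) atTop := by
  have hs : Tendsto Real.sqrt (𝓝[>] (0:ℝ)) (𝓝[>] (0:ℝ)) := by
    apply tendsto_nhdsWithin_of_tendsto_nhds_of_eventually_within _ sqrt_tendsto_zero_right
    filter_upwards [self_mem_nhdsWithin] with t ht
    exact Real.sqrt_pos.mpr ht
  have h1 : Tendsto (fun t : ℝ => r / Real.sqrt t) (𝓝[>] (0:ℝ)) atTop := by
    simp_rw [div_eq_mul_inv]
    exact (tendsto_inv_nhdsGT_zero.comp hs).const_mul_atTop hr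
  have h2 : Tendsto (fun t : ℝ => β * Real.sqrt t) (𝓝[>] (0:ℝ)) (𝓝 (β * 0)) :=
    sqrt_tendsto_zero_right.const_mul β
  exact h1.atTop_add h2

lemma h_tendsto_zero_right (r s β : ℝ) (hr : 0 < r) :
    Tendsto (fun t => Real.exp (2*r*β + (β^2-s^2)*t) *
      erfc (r/Real.sqrt t + β*Real.sqrt t)) (𝓝[>] (0:ℝ)) (𝓝 0) := by
  have h1 : Tendsto (fun t : ℝ => Real.exp (2*r*β + (β^2-s^2)*t)) (𝓝[>] (0:ℝ))
      (𝓝 (Real.exp (2*r*β + (β^2-s^2)*0))) := by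
    exact ((Real.continuous_exp.comp (by continuity)).tendsto 0).mono_left nhdsWithin_le_nhds
  have h2 := erfc_tendsto_atTop.comp (arg_nhdsGT hr β)
  simpa using h1.mul h2

lemma exp_neg_mul_tendsto {c : ℝ} (hc : 0 < c) :
    Tendsto (fun t : ℝ => Real.exp (-(c*t))) atTop (𝓝 0) :=
  Real.tendsto_exp_atBot.comp
    (tendsto_neg_atTop_atBot.comp (tendsto_id.const_mul_atTop hc))

lemma mul_exp_neg_tendsto {c : ℝ} (hc : 0 < c) :
    Tendsto (fun t : ℝ => t * Real.exp (-(c*t))) atTop (𝓝 0) := by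
  have h := tendsto_pow_mul_exp_neg_atTop_nhds_zero 1
  have h2 := h.comp (tendsto_id.const_mul_atTop hc)
  have h3 := h2.const_mul (1/c)
  simp only [mul_zero] at h3
  refine h3.congr fun t => ?_
  simp only [Function.comp_apply, pow_one, id_eq]
  field_simp

lemma h_le_bound {r s β t : ℝ} (hr : 0 < r) (hβ : 0 < β) (ht : 1 ≤ t) :
    Real.exp (2*r*β + (β^2-s^2)*t) * erfc (r/Real.sqrt t + β*Real.sqrt t)
      ≤ Real.exp (-(s^2*t)) / (β * Real.sqrt π) := by
  have ht0 : (0:ℝ) < t := lt_of_lt_of_le one_pos ht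
  obtain ⟨w, hw0, rfl⟩ : ∃ w : ℝ, 0 < w ∧ w^2 = t :=
    ⟨Real.sqrt t, Real.sqrt_pos.mpr ht0, Real.sq_sqrt ht0.le⟩
  have hw1 : 1 ≤ w := by nlinarith
  rw [Real.sqrt_sq hw0.le]
  set x := r/w + β*w with hxdef
  have hx : 0 < x := by positivity
  have hxβ : β ≤ x := by
    have : β * 1 ≤ β * w := by nlinarith
    have h2 : 0 < r / w := by positivity
    simp only [hxdef]; nlinarith
  have step1 : Real.exp (2*r*β + (β^2-s^2)*w^2) * erfc x
      ≤ Real.exp (2*r*β + (β^2-s^2)*w^2) * (Real.exp (-x^2) / (x * Real.sqrt π)) :=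
    mul_le_mul_of_nonneg_left (erfc_le hx) (Real.exp_pos _).le
  have key : Real.exp (2*r*β + (β^2-s^2)*w^2) * Real.exp (-x^2)
      = Real.exp (-(r^2/w^2) - s^2*w^2) := by
    rw [← Real.exp_add]
    congr 1
    simp only [hxdef]
    field_simp
    ring
  have step2 : Real.exp (2*r*β + (β^2-s^2)*w^2) * (Real.exp (-x^2) / (x * Real.sqrt π))
      ≤ Real.exp (-(s^2*w^2)) / (β * Real.sqrt π) := by
    have e1 : Real.exp (2*r*β + (β^2-s^2)*w^2) * (Real.exp (-x^2) / (x * Real.sqrt π))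
        = Real.exp (-(r^2/w^2) - s^2*w^2) * (1 / (x * Real.sqrt π)) := by
      rw [← key]; ring
    rw [e1]
    have e2 : Real.exp (-(r^2/w^2) - s^2*w^2) ≤ Real.exp (-(s^2*w^2)) := by
      apply Real.exp_le_exp.mpr
      have : 0 ≤ r^2/w^2 := by positivity
      linarith
    have e3 : 1 / (x * Real.sqrt π) ≤ 1 / (β * Real.sqrt π) := by
      apply one_div_le_one_div_of_le (by positivity)
      exact mul_le_mul_of_nonneg_right hxβ sqrt_pi_pos.le
    calc Real.exp (-(r^2/w^2) - s^2*w^2) * (1 / (x * Real.sqrt π))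
        ≤ Real.exp (-(s^2*w^2)) * (1 / (β * Real.sqrt π)) :=
          mul_le_mul e2 e3 (by positivity) (Real.exp_pos _).le
      _ = Real.exp (-(s^2*w^2)) / (β * Real.sqrt π) := by ring
  exact step1.trans step2

lemma hα_tendsto_top {r s α : ℝ} (hr : 0 < r) (hs : 0 < s) (hα : 0 < α + s) :
    Tendsto (fun t => Real.exp (2*r*α + (α^2-s^2)*t) *
      erfc (r/Real.sqrt t + α*Real.sqrt t)) atTop (𝓝 0) := by
  have hnn : ∀ t : ℝ, 0 ≤ Real.exp (2*r*α + (α^2-s^2)*t) *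
      erfc (r/Real.sqrt t + α*Real.sqrt t) :=
    fun t => mul_nonneg (Real.exp_pos _).le (erfc_nonneg _)
  by_cases hα0 : 0 < α
  · apply squeeze_zero' (Eventually.of_forall hnn)
    · filter_upwards [eventually_ge_atTop (1:ℝ)] with t ht
      exact h_le_bound hr hα0 ht
    · have := (exp_neg_mul_tendsto (show (0:ℝ) < s^2 by positivity)).div_const
        (α * Real.sqrt π)
      simpa using this
  · push_neg at hα0
    have hα2 : α^2 - s^2 < 0 := by nlinarith
    apply squeeze_zero' (Eventually.of_forall hnn)
    · apply Eventually.of_forall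
      intro t
      calc Real.exp (2*r*α + (α^2-s^2)*t) * erfc (r/Real.sqrt t + α*Real.sqrt t)
          ≤ Real.exp (2*r*α + (α^2-s^2)*t) * 2 :=
            mul_le_mul_of_nonneg_left (erfc_le_two _) (Real.exp_pos _).le
        _ = Real.exp (2*r*α) * Real.exp (-( (s^2-α^2) * t)) * 2 := by
            rw [Real.exp_add]; ring_nf
    · have h1 := ((exp_neg_mul_tendsto (show (0:ℝ) < s^2 - α^2 by linarith)).const_mul
        (Real.exp (2*r*α))).mul_const 2
      simpa using h1

lemma hs_tendsto_top (r : ℝ) {s : ℝ} (hs : 0 < s) :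
    Tendsto (fun t => Real.exp (2*r*s + (s^2-s^2)*t) *
      erfc (r/Real.sqrt t + s*Real.sqrt t)) atTop (𝓝 0) := by
  simp only [sub_self, zero_mul, add_zero]
  have := (erfc_tendsto_atTop.comp (arg_atTop r hs)).const_mul (Real.exp (2*r*s))
  simpa using this

lemma hns_tendsto_top (r : ℝ) {s : ℝ} (hs : 0 < s) :
    Tendsto (fun t => Real.exp (2*r*(-s) + ((-s)^2-s^2)*t) *
      erfc (r/Real.sqrt t + (-s)*Real.sqrt t)) atTop (𝓝 (Real.exp (2*r*(-s)) * 2)) := by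
  simp only [neg_sq, sub_self, zero_mul, add_zero]
  exact (erfc_tendsto_atBot.comp (arg_atBot r (neg_neg_iff_pos.mpr hs))).const_mul _

lemma ths_tendsto_top {r s : ℝ} (hr : 0 < r) (hs : 0 < s) :
    Tendsto (fun t => t * (Real.exp (2*r*s + (s^2-s^2)*t) *
      erfc (r/Real.sqrt t + s*Real.sqrt t))) atTop (𝓝 0) := by
  apply squeeze_zero'
  · filter_upwards [eventually_ge_atTop (0:ℝ)] with t ht
    exact mul_nonneg ht (mul_nonneg (Real.exp_pos _).le (erfc_nonneg _))
  · filter_upwards [eventually_ge_atTop (1:ℝ)] with t ht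
    have h1 := h_le_bound (s := s) hr hs ht
    have ht0 : (0:ℝ) ≤ t := by linarith
    calc t * (Real.exp (2*r*s + (s^2-s^2)*t) * erfc (r/Real.sqrt t + s*Real.sqrt t))
        ≤ t * (Real.exp (-(s^2*t)) / (s * Real.sqrt π)) :=
          mul_le_mul_of_nonneg_left h1 ht0
      _ = (t * Real.exp (-(s^2*t))) / (s * Real.sqrt π) := by ring
  · have := (mul_exp_neg_tendsto (show (0:ℝ) < s^2 by positivity)).div_const (s * Real.sqrt π)
    simpa using this

lemma u_tendsto_top {r s : ℝ} (hs : 0 < s) :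
    Tendsto (fun t => Real.sqrt t * Real.exp (-r^2/t - s^2*t)) atTop (𝓝 0) := by
  apply squeeze_zero' (g := fun t : ℝ => t * Real.exp (-(s^2*t)))
  · exact Eventually.of_forall fun t => mul_nonneg (Real.sqrt_nonneg _) (Real.exp_pos _).le
  · filter_upwards [eventually_ge_atTop (1:ℝ)] with t ht
    have ht0 : (0:ℝ) < t := lt_of_lt_of_le one_pos ht
    have h1 : Real.sqrt t ≤ t := by
      conv_rhs => rw [← Real.sqrt_sq ht0.le]
      apply Real.sqrt_le_sqrt
      nlinarith
    have h2 : Real.exp (-r^2/t - s^2*t) ≤ Real.exp (-(s^2*t)) := by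
      apply Real.exp_le_exp.mpr
      have : 0 ≤ r^2/t := by positivity
      have e : -r^2/t = -(r^2/t) := by ring
      rw [e]; linarith
    exact mul_le_mul h1 h2 (Real.exp_pos _).le ht0.le
  · exact mul_exp_neg_tendsto (show (0:ℝ) < s^2 by positivity)

lemma u_tendsto_right (r s : ℝ) :
    Tendsto (fun t => Real.sqrt t * Real.exp (-r^2/t - s^2*t)) (𝓝[>] (0:ℝ)) (𝓝 0) := by
  apply squeeze_zero'
  · exact Eventually.of_forall fun t => mul_nonneg (Real.sqrt_nonneg _) (Real.exp_pos _).le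
  · filter_upwards [self_mem_nhdsWithin] with t ht
    have ht0 : (0:ℝ) < t := ht
    have h2 : Real.exp (-r^2/t - s^2*t) ≤ 1 := by
      rw [← Real.exp_zero]
      apply Real.exp_le_exp.mpr
      have h3 : 0 ≤ r^2/t := by positivity
      have h4 : 0 ≤ s^2*t := by positivity
      have e : -r^2/t = -(r^2/t) := by ring
      rw [e]; linarith
    calc Real.sqrt t * Real.exp (-r^2/t - s^2*t) ≤ Real.sqrt t * 1 :=
        mul_le_mul_of_nonneg_left h2 (Real.sqrt_nonneg _)
      _ = Real.sqrt t := mul_one _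
  · exact sqrt_tendsto_zero_right


/-- `W(n,m) = exp(2nm + m²) erfc(n + m)`. -/
noncomputable def W (n m : ℝ) : ℝ := Real.exp (2 * n * m + m ^ 2) * erfc (n + m)

lemma integrand_eq {α r s t : ℝ} (ht : 0 < t) :
    Real.exp (-s^2 * t) * W (r / Real.sqrt t) (α * Real.sqrt t)
      = Real.exp (2*r*α + (α^2-s^2)*t) * erfc (r / Real.sqrt t + α * Real.sqrt t) := by
  obtain ⟨w, hw0, rfl⟩ : ∃ w : ℝ, 0 < w ∧ w^2 = t :=
    ⟨Real.sqrt t, Real.sqrt_pos.mpr ht, Real.sq_sqrt ht.le⟩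
  unfold W
  rw [Real.sqrt_sq hw0.le, ← mul_assoc, ← Real.exp_add]
  congr 2
  field_simp
  ring

lemma main_aux (α r s : ℝ) (hr : 0 < r) (hs : 0 < s) (hα : 0 < α + s) :
    ∫ t in Set.Ioi (0:ℝ), Real.exp (-s^2 * t) * W (r / Real.sqrt t) (α * Real.sqrt t) =
      Real.exp (-2 * r * s) / (α * s + s^2) := by
  have hp : (0:ℝ) < Real.sqrt π := sqrt_pi_pos
  have hpos : ∀ x ∈ Set.Ioi (0:ℝ), 0 ≤ Real.exp (-s^2 * x) *
      W (r / Real.sqrt x) (α * Real.sqrt x) := by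
    intro x _
    exact mul_nonneg (Real.exp_pos _).le
      (mul_nonneg (Real.exp_pos _).le (erfc_nonneg _))
  by_cases hαs : α = s
  · -- degenerate case α = s
    subst hαs
    set a : ℝ := r/α - 1/(4*α^2) with ha
    set b : ℝ := 1/(4*α^2) with hb
    set c : ℝ := -(1/(α*Real.sqrt π)) with hc
    set Ginner : ℝ → ℝ := fun t =>
      (t + a) * (Real.exp (2*r*α + (α^2-α^2)*t) * erfc (r/Real.sqrt t + α*Real.sqrt t))
      + b * (Real.exp (2*r*(-α) + ((-α)^2-α^2)*t) * erfc (r/Real.sqrt t + (-α)*Real.sqrt t))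
      + c * (Real.sqrt t * Real.exp (-r^2/t - α^2*t)) with hGi
    set G : ℝ → ℝ := fun t => if t ≤ 0 then 0 else Ginner t with hG
    have hGeq : ∀ᶠ t in 𝓝[>] (0:ℝ), G t = Ginner t := by
      filter_upwards [self_mem_nhdsWithin] with u hu
      exact if_neg (not_le.mpr hu)
    have hG0 : G 0 = 0 := if_pos le_rfl
    have hcont : ContinuousWithinAt G (Set.Ici 0) 0 := by
      rw [← continuousWithinAt_Ioi_iff_Ici]
      have h1 : Tendsto (fun t => (t + a) * (Real.exp (2*r*α + (α^2-α^2)*t) *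
          erfc (r/Real.sqrt t + α*Real.sqrt t))) (𝓝[>] (0:ℝ)) (𝓝 ((0+a)*0)) := by
        refine Tendsto.mul ?_ (h_tendsto_zero_right r α α hr)
        exact ((continuous_id.add continuous_const).tendsto 0).mono_left nhdsWithin_le_nhds
      have h2 := (h_tendsto_zero_right r α (-α) hr).const_mul b
      have h3 := (u_tendsto_right r α).const_mul c
      have hsum := (h1.add h2).add h3
      have h0 : Tendsto Ginner (𝓝[>] (0:ℝ)) (𝓝 0) := by
        have e : ((0+a)*0 + b*0 + c*0 : ℝ) = 0 := by ring
        rw [e] at hsum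
        exact hsum
      show Tendsto G (𝓝[Set.Ioi (0:ℝ)] 0) (𝓝 (G 0))
      rw [hG0]
      exact h0.congr' (hGeq.mono fun u hu => hu.symm)
    have hderiv : ∀ t ∈ Set.Ioi (0:ℝ), HasDerivAt G
        (Real.exp (-α^2 * t) * W (r / Real.sqrt t) (α * Real.sqrt t)) t := by
      intro t ht
      have ht0 : (0:ℝ) < t := ht
      have hd1 : HasDerivAt (fun u : ℝ => u + a) 1 t := (hasDerivAt_id t).add_const a
      have hd2 := hd1.mul (h_hasDerivAt r α α ht0)
      have hd3 := (h_hasDerivAt r α (-α) ht0).const_mul b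
      have hd4 := (u_hasDerivAt r α ht0).const_mul c
      have hsum := (hd2.add hd3).add hd4
      have hGev : G =ᶠ[𝓝 t] Ginner := by
        filter_upwards [eventually_gt_nhds ht0] with u hu
        exact if_neg (not_le.mpr hu)
      have hmain := hsum.congr_of_eventuallyEq hGev
      refine hmain.congr_deriv (Eq.symm ?_)
      rw [integrand_eq ht0]
      obtain ⟨w, hw0, rfl⟩ : ∃ w : ℝ, 0 < w ∧ w^2 = t :=
        ⟨Real.sqrt t, Real.sqrt_pos.mpr ht0, Real.sq_sqrt ht0.le⟩
      simp only [Real.sqrt_sq hw0.le, ha, hb, hc]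
      field_simp
      ring
    have htop : Tendsto G atTop (𝓝 (Real.exp (-2 * r * α) / (α * α + α^2))) := by
      have h1 : Tendsto (fun t => (t + a) * (Real.exp (2*r*α + (α^2-α^2)*t) *
          erfc (r/Real.sqrt t + α*Real.sqrt t))) atTop (𝓝 0) := by
        have := (ths_tendsto_top hr hs).add ((hs_tendsto_top r hs).const_mul a)
        simp only [mul_zero, add_zero] at this
        exact this.congr fun t => by ring
      have h2 := (hns_tendsto_top r hs).const_mul b
      have h3 := (u_tendsto_top (r := r) hs).const_mul c
      have hsum := (h1.add h2).add h3
      have hval : 0 + b * (Real.exp (2*r*(-α)) * 2) + c * 0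
          = Real.exp (-2 * r * α) / (α * α + α^2) := by
        rw [show 2*r*(-α) = -2*r*α by ring, hb]
        field_simp
        ring
      rw [hval] at hsum
      refine hsum.congr' ?_
      filter_upwards [eventually_gt_atTop (0:ℝ)] with u hu
      exact (if_neg (not_le.mpr hu)).symm
    have := integral_Ioi_of_hasDerivAt_of_nonneg hcont hderiv hpos htop
    rw [this, hG0, sub_zero]
  · -- generic case α ≠ s
    have hαs' : α - s ≠ 0 := sub_ne_zero.mpr hαs
    have hαps : (0:ℝ) < α + s := hα
    set cα : ℝ := 1/((α-s)*(α+s)) with hca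
    set cs : ℝ := -(1/(2*s*(α-s))) with hcs
    set cns : ℝ := 1/(2*s*(α+s)) with hcns
    set Ginner : ℝ → ℝ := fun t =>
      cα * (Real.exp (2*r*α + (α^2-s^2)*t) * erfc (r/Real.sqrt t + α*Real.sqrt t))
      + cs * (Real.exp (2*r*s + (s^2-s^2)*t) * erfc (r/Real.sqrt t + s*Real.sqrt t))
      + cns * (Real.exp (2*r*(-s) + ((-s)^2-s^2)*t) * erfc (r/Real.sqrt t + (-s)*Real.sqrt t))
      with hGi
    set G : ℝ → ℝ := fun t => if t ≤ 0 then 0 else Ginner t with hG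
    have hGeq : ∀ᶠ t in 𝓝[>] (0:ℝ), G t = Ginner t := by
      filter_upwards [self_mem_nhdsWithin] with u hu
      exact if_neg (not_le.mpr hu)
    have hG0 : G 0 = 0 := if_pos le_rfl
    have hcont : ContinuousWithinAt G (Set.Ici 0) 0 := by
      rw [← continuousWithinAt_Ioi_iff_Ici]
      have h1 := (h_tendsto_zero_right r s α hr).const_mul cα
      have h2 := (h_tendsto_zero_right r s s hr).const_mul cs
      have h3 := (h_tendsto_zero_right r s (-s) hr).const_mul cns
      have hsum := (h1.add h2).add h3
      have h0 : Tendsto Ginner (𝓝[>] (0:ℝ)) (𝓝 0) := by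
        have e : (cα*0 + cs*0 + cns*0 : ℝ) = 0 := by ring
        rw [e] at hsum
        exact hsum
      show Tendsto G (𝓝[Set.Ioi (0:ℝ)] 0) (𝓝 (G 0))
      rw [hG0]
      exact h0.congr' (hGeq.mono fun u hu => hu.symm)
    have hderiv : ∀ t ∈ Set.Ioi (0:ℝ), HasDerivAt G
        (Real.exp (-s^2 * t) * W (r / Real.sqrt t) (α * Real.sqrt t)) t := by
      intro t ht
      have ht0 : (0:ℝ) < t := ht
      have hd1 := (h_hasDerivAt r s α ht0).const_mul cα
      have hd2 := (h_hasDerivAt r s s ht0).const_mul cs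
      have hd3 := (h_hasDerivAt r s (-s) ht0).const_mul cns
      have hsum := (hd1.add hd2).add hd3
      have hGev : G =ᶠ[𝓝 t] Ginner := by
        filter_upwards [eventually_gt_nhds ht0] with u hu
        exact if_neg (not_le.mpr hu)
      have hmain := hsum.congr_of_eventuallyEq hGev
      refine hmain.congr_deriv (Eq.symm ?_)
      rw [integrand_eq ht0]
      obtain ⟨w, hw0, rfl⟩ : ∃ w : ℝ, 0 < w ∧ w^2 = t :=
        ⟨Real.sqrt t, Real.sqrt_pos.mpr ht0, Real.sq_sqrt ht0.le⟩
      simp only [Real.sqrt_sq hw0.le, hca, hcs, hcns]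
      field_simp
      ring
    have htop : Tendsto G atTop (𝓝 (Real.exp (-2 * r * s) / (α * s + s^2))) := by
      have h1 := (hα_tendsto_top hr hs hα).const_mul cα
      have h2 := (hs_tendsto_top r hs).const_mul cs
      have h3 := (hns_tendsto_top r hs).const_mul cns
      have hsum := (h1.add h2).add h3
      have hval : (cα*0 + cs*0 + cns*(Real.exp (2*r*(-s)) * 2) : ℝ)
          = Real.exp (-2 * r * s) / (α * s + s^2) := by
        rw [show 2*r*(-s) = -2*r*s by ring, hcns]
        have hdpos : (0:ℝ) < α * s + s^2 := by nlinarith [mul_pos hs hα]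
        field_simp
        ring
      rw [hval] at hsum
      refine hsum.congr' ?_
      filter_upwards [eventually_gt_atTop (0:ℝ)] with u hu
      exact (if_neg (not_le.mpr hu)).symm
    have := integral_Ioi_of_hasDerivAt_of_nonneg hcont hderiv hpos htop
    rw [this, hG0, sub_zero]


/-- For `r > 0`, `k_d > 0`, and `α + √k_d > 0`,
`∫₀^∞ exp(−k_d t) W(r/√t, α√t) dt = exp(−2r√k_d)/(α√k_d + k_d)`. -/
theorem W_time_integral_eq (α r kd : ℝ) (hr : 0 < r) (hkd : 0 < kd)
    (hα : 0 < α + Real.sqrt kd) :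
    ∫ t in Set.Ioi (0 : ℝ), Real.exp (-kd * t) * W (r / Real.sqrt t) (α * Real.sqrt t) =
      Real.exp (-2 * r * Real.sqrt kd) / (α * Real.sqrt kd + kd) := by
  have h := main_aux α r (Real.sqrt kd) hr (Real.sqrt_pos.mpr hkd) hα
  rw [Real.sq_sqrt hkd.le] at h
  exact h
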